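/- arXiv:1903.05030 — 5 statements merged into one kernel-verified Lean document; each statement's English description precedes it below -/
import Mathlib

section
/- Let T1 ∈ ℝ^{Nx×Nx}, T2 ∈ ℝ^{Ny×Ny}, define A = I_{Ny} ⊗ T1 + T2ᵀ ⊗ I_{Nx}, assume A is invertible, and let h_t ∈ ℝ. Let F be an Nx×Ny real matrix with f = vec(F), and set v = A^{−1}( exp(h_t A) f − f ). Then the Nx×Ny matrix V with vec(V) = v is a solution of the Sylvester equation T1 V + V T2 = G − F, where G = exp(h_t T1) · F · exp(h_t T2). -/
/-! The summands `I ⊗ T₁` and `T₂ᵀ ⊗ I` of the Kronecker sum `A` commute, and `X ↦ I ⊗ X`,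
`X ↦ X ⊗ I` are continuous ring homomorphisms, so `exp (h A) = (exp (h T₂))ᵀ ⊗ exp (h T₁)`.
Under `vec`, `B ⊗ C` acts as `X ↦ C X Bᵀ`; hence `exp (h A) f = vec G`, and `A` acts as the
Sylvester operator `X ↦ T₁ X + X T₂`. Applying `A` to `v = A⁻¹ (exp (h A) f - f)` then gives
`vec (T₁ V + V T₂) = vec (G - F)`. -/

open Matrix NormedSpace
open scoped Kronecker

/-- `vec` stacks the columns of an `Nx × Ny` matrix one after the other:
the component of `vec U` at index `(j, i)` is `U i j`. -/
def vec {Nx Ny : ℕ} (U : Matrix (Fin Nx) (Fin Ny) ℝ) : Fin Ny × Fin Nx → ℝ :=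
  fun p => U p.2 p.1

theorem Continuous.matrix_kronecker {X l m n p R : Type*} [TopologicalSpace X]
    [TopologicalSpace R] [Mul R] [ContinuousMul R] {A : X → Matrix l m R} {B : X → Matrix n p R}
    (hA : Continuous A) (hB : Continuous B) : Continuous fun x => A x ⊗ₖ B x :=
  continuous_matrix fun i j => (hA.matrix_elem i.1 j.1).mul (hB.matrix_elem i.2 j.2)

namespace Matrix

variable {l m R : Type*} [DecidableEq l] [DecidableEq m]

section CommSemiring

variable [CommSemiring R]

def kroneckerSum (T₁ : Matrix m m R) (T₂ : Matrix l l R) : Matrix (l × m) (l × m) R :=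
  1 ⊗ₖ T₁ + T₂ᵀ ⊗ₖ 1

theorem smul_kroneckerSum {S : Type*} [Monoid S] [DistribMulAction S R] [IsScalarTower S R R]
    [SMulCommClass S R R] (t : S) (T₁ : Matrix m m R) (T₂ : Matrix l l R) :
    t • kroneckerSum T₁ T₂ = kroneckerSum (t • T₁) (t • T₂) := by
  rw [kroneckerSum, kroneckerSum, smul_add, ← kronecker_smul, ← smul_kronecker, transpose_smul]

variable [Fintype l] [Fintype m]

theorem kroneckerSum_mulVec_vec (T₁ : Matrix m m R) (T₂ : Matrix l l R) (X : Matrix m l R) :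
    kroneckerSum T₁ T₂ *ᵥ vec X = vec (T₁ * X + X * T₂) := by
  rw [kroneckerSum, add_mulVec, kronecker_mulVec_vec, kronecker_mulVec_vec, transpose_one,
    transpose_transpose, Matrix.mul_one, Matrix.one_mul, vec_add]

theorem commute_one_kronecker_kronecker_one (A : Matrix m m R) (B : Matrix l l R) :
    Commute (1 ⊗ₖ A) (B ⊗ₖ 1) := by
  rw [Commute, SemiconjBy, ← mul_kronecker_mul, ← mul_kronecker_mul, Matrix.one_mul,
    Matrix.mul_one, Matrix.one_mul, Matrix.mul_one]

variable (l) in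
def oneKroneckerRingHom : Matrix m m R →+* Matrix (l × m) (l × m) R where
  toFun X := 1 ⊗ₖ X
  map_one' := one_kronecker_one
  map_mul' X Y := by rw [← mul_kronecker_mul, Matrix.one_mul]
  map_zero' := kronecker_zero _
  map_add' := kronecker_add _

variable (l) in
def kroneckerOneRingHom : Matrix m m R →+* Matrix (m × l) (m × l) R where
  toFun X := X ⊗ₖ 1
  map_one' := one_kronecker_one
  map_mul' X Y := by rw [← mul_kronecker_mul, Matrix.one_mul]
  map_zero' := zero_kronecker _
  map_add' X Y := add_kronecker X Y 1

end CommSemiring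

section Exponential

variable {n 𝕜 : Type*} [Fintype l] [Fintype m] [Fintype n] [DecidableEq n] [RCLike 𝕜]

theorem map_exp {F : Type*} [FunLike F (Matrix m m 𝕜) (Matrix n n 𝕜)]
    [RingHomClass F (Matrix m m 𝕜) (Matrix n n 𝕜)] (f : F) (hf : Continuous f)
    (A : Matrix m m 𝕜) : f (exp A) = exp (f A) := by
  -- `exp` does not depend on the norm; the operator norm makes both matrix rings Banach algebras.
  let _ : NormedRing (Matrix m m 𝕜) := Matrix.linftyOpNormedRing
  let _ : NormedRing (Matrix n n 𝕜) := Matrix.linftyOpNormedRing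
  let _ : NormedAlgebra 𝕜 (Matrix m m 𝕜) := Matrix.linftyOpNormedAlgebra
  let _ : NormedAlgebra ℚ (Matrix m m 𝕜) := NormedAlgebra.restrictScalars ℚ 𝕜 _
  exact @NormedSpace.map_exp _ _ _ _ (FiniteDimensional.complete 𝕜 _) _ _ _ _ _ f hf A

theorem exp_one_kronecker (A : Matrix m m 𝕜) :
    exp ((1 : Matrix l l 𝕜) ⊗ₖ A) = 1 ⊗ₖ exp A :=
  (map_exp (oneKroneckerRingHom l) (continuous_const.matrix_kronecker continuous_id) A).symm

theorem exp_kronecker_one (A : Matrix m m 𝕜) :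
    exp (A ⊗ₖ (1 : Matrix l l 𝕜)) = exp A ⊗ₖ 1 :=
  (map_exp (kroneckerOneRingHom l) (continuous_id.matrix_kronecker continuous_const) A).symm

theorem exp_kroneckerSum (T₁ : Matrix m m 𝕜) (T₂ : Matrix l l 𝕜) :
    exp (kroneckerSum T₁ T₂) = (exp T₂)ᵀ ⊗ₖ exp T₁ := by
  rw [kroneckerSum, exp_add_of_commute _ _ (commute_one_kronecker_kronecker_one T₁ T₂ᵀ),
    exp_one_kronecker, exp_kronecker_one, ← mul_kronecker_mul, Matrix.one_mul, Matrix.mul_one,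
    exp_transpose]

theorem exp_kroneckerSum_mulVec_vec (T₁ : Matrix m m 𝕜) (T₂ : Matrix l l 𝕜) (X : Matrix m l 𝕜) :
    exp (kroneckerSum T₁ T₂) *ᵥ vec X = vec (exp T₁ * X * exp T₂) := by
  rw [exp_kroneckerSum, kronecker_mulVec_vec, transpose_transpose]

end Exponential

end Matrix

/-- With `A = I ⊗ T1 + T2ᵀ ⊗ I` invertible, `f = vec F` and
`v = A⁻¹(exp(h_t A) f − f)`, the matrix `V` with `vec(V) = v` solves the
Sylvester equation `T1 V + V T2 = G − F`, where `G = exp(h_t T1) F exp(h_t T2)`. -/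
theorem phi_vec_solves_sylvester {Nx Ny : ℕ}
    (T1 : Matrix (Fin Nx) (Fin Nx) ℝ) (T2 : Matrix (Fin Ny) (Fin Ny) ℝ)
    (A : Matrix (Fin Ny × Fin Nx) (Fin Ny × Fin Nx) ℝ)
    (hA : A = (1 : Matrix (Fin Ny) (Fin Ny) ℝ) ⊗ₖ T1 + T2ᵀ ⊗ₖ (1 : Matrix (Fin Nx) (Fin Nx) ℝ))
    (hAinv : IsUnit A.det) (ht : ℝ)
    (F V : Matrix (Fin Nx) (Fin Ny) ℝ)
    (f v : Fin Ny × Fin Nx → ℝ) (hf : f = _root_.vec F)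
    (hv : v = A⁻¹.mulVec ((exp (ht • A)).mulVec f - f))
    (hV : _root_.vec V = v)
    (G : Matrix (Fin Nx) (Fin Ny) ℝ)
    (hG : G = exp (ht • T1) * F * exp (ht • T2)) :
    T1 * V + V * T2 = G - F := by
  have hA : A = kroneckerSum T1 T2 := hA
  have hf : f = Matrix.vec F := hf
  have hV : Matrix.vec V = v := hV
  have hAv : A *ᵥ Matrix.vec V = Matrix.vec (G - F) := by
    rw [hV, hv, mulVec_mulVec, mul_nonsing_inv _ hAinv, one_mulVec, hA, smul_kroneckerSum, hf,
      exp_kroneckerSum_mulVec_vec, hG, vec_sub]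
  rw [hA, kroneckerSum_mulVec_vec] at hAv
  exact vec_inj.mp hAv
end

section
/- Let ξ < 0 and μ ∈ ℝ. Then | μ (e^ξ − 1)/ξ + e^ξ | < 1 if and only if ξ (1 + e^ξ)/(1 − e^ξ) < μ < −ξ. -/
open Real

/-- Stability region of the exponential Euler method: for `ξ < 0`,
`|μ(e^ξ − 1)/ξ + e^ξ| < 1 ↔ ξ(1 + e^ξ)/(1 − e^ξ) < μ < −ξ`. -/
theorem expEuler_amplification_stability (ξ μ : ℝ) (hξ : ξ < 0) :
    |μ * (Real.exp ξ - 1) / ξ + Real.exp ξ| < 1 ↔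
      ξ * (1 + Real.exp ξ) / (1 - Real.exp ξ) < μ ∧ μ < -ξ := by
  have hξne : ξ ≠ 0 := ne_of_lt hξ
  have he0 : 0 < Real.exp ξ := Real.exp_pos _
  have he1 : Real.exp ξ < 1 := by
    have := Real.exp_lt_one_iff.mpr hξ
    simpa using this
  have hd : 0 < 1 - Real.exp ξ := by linarith
  have hinv : ξ * ξ⁻¹ = 1 := mul_inv_cancel₀ hξne
  have hinvneg : ξ⁻¹ < 0 := inv_neg''.mpr hξ
  rw [abs_lt, div_eq_mul_inv, div_lt_iff₀ hd]
  have key : μ * (Real.exp ξ - 1) * ξ⁻¹ * ξ = μ * (Real.exp ξ - 1) := by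
    field_simp
  constructor
  · rintro ⟨h1, h2⟩
    constructor
    · nlinarith [mul_lt_mul_of_neg_left h1 hξ, key]
    · nlinarith [mul_lt_mul_of_neg_left h2 hξ, key]
  · rintro ⟨h1, h2⟩
    constructor
    · nlinarith [mul_lt_mul_of_neg_left h1 hinvneg, key]
    · nlinarith [mul_lt_mul_of_neg_left h2 hinvneg, key]
end

section
/- Let ξ < 0 and μ ∈ ℝ, and consider the quadratic polynomial p(z) = (3 − 2ξ) z² − 4(μ + 1) z + (1 + 2μ). Then both (complex) roots of p have modulus strictly less than 1 if and only if (ξ − 4)/3 < μ < −ξ. -/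
/-!
Jury's criterion for a real quadratic `a z² + b z + c` with `a > 0`: both roots lie in the open
unit disk iff `|b| < a + c` and `c < a`. If `p(±1) ≤ 0`, the quadratic formula gives a real root
beyond `±1`; the product of the roots is `c / a`, which forces `c < a`. Conversely, a real root
`x` with `|x| ≥ 1` is excluded by `p(x) ≥ (|x| - 1)(a|x| - c) + (a + c - |b|)|x| > 0`, and a
non-real root `z` satisfies `2a Re z = -b`, whence `a ‖z‖² = c < a`.
For the 2-SBDF polynomial `p(1) = -2(ξ + μ)`, `p(-1) = 8 - 2ξ + 6μ`, and `c < a` follows from `μ < -ξ`.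
-/

open Complex

section QuadraticRootsInUnitDisk

variable {a b c : ℝ}

theorem exists_quadratic_eq_zero_one_le (ha : 0 < a) (h : a + b + c ≤ 0) :
    ∃ x : ℝ, 1 ≤ x ∧ a * x ^ 2 + b * x + c = 0 := by
  have hD : (2 * a + b) ^ 2 ≤ discrim a b c := by rw [discrim]; nlinarith
  have hs : discrim a b c = √(discrim a b c) * √(discrim a b c) :=
    (Real.mul_self_sqrt ((sq_nonneg _).trans hD)).symm
  refine ⟨(-b + √(discrim a b c)) / (2 * a), ?_, ?_⟩
  · rw [le_div_iff₀ (by positivity)]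
    linarith [le_abs_self (2 * a + b), Real.abs_le_sqrt hD]
  · rw [sq, quadratic_eq_zero_iff ha.ne' hs]
    exact Or.inl rfl

theorem add_add_pos_of_roots_norm_lt_one (ha : 0 < a)
    (h : ∀ z : ℂ, a * z ^ 2 + b * z + c = 0 → ‖z‖ < 1) : 0 < a + b + c := by
  by_contra! hp
  obtain ⟨x, hx, hroot⟩ := exists_quadratic_eq_zero_one_le ha hp
  have := h x (by exact_mod_cast hroot)
  rw [norm_real, Real.norm_eq_abs] at this
  linarith [le_abs_self x]

theorem lt_of_roots_norm_lt_one (ha : 0 < a)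
    (h : ∀ z : ℂ, a * z ^ 2 + b * z + c = 0 → ‖z‖ < 1) : c < a := by
  have ha' : (a : ℂ) ≠ 0 := ofReal_ne_zero.mpr ha.ne'
  obtain ⟨s, hs⟩ := IsAlgClosed.exists_eq_mul_self (discrim (a : ℂ) b c)
  have root (z : ℂ) (hz : z = (-b + s) / (2 * a) ∨ z = (-b - s) / (2 * a)) : ‖z‖ < 1 :=
    h z (by rw [sq]; exact (quadratic_eq_zero_iff ha' hs z).mpr hz)
  have vieta : (-b + s) / (2 * a) * ((-b - s) / (2 * a)) = ((c / a : ℝ) : ℂ) := by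
    rw [discrim] at hs
    push_cast
    field_simp
    linear_combination hs
  have : c / a < 1 :=
    calc c / a ≤ ‖((c / a : ℝ) : ℂ)‖ := by rw [norm_real]; exact le_abs_self _
      _ = ‖(-b + s) / (2 * a)‖ * ‖(-b - s) / (2 * a)‖ := by rw [← vieta, norm_mul]
      _ < 1 := mul_lt_one_of_nonneg_of_lt_one_left (norm_nonneg _) (root _ (Or.inl rfl))
          (root _ (Or.inr rfl)).le
  rwa [div_lt_one ha] at this

theorem quadratic_pos_of_one_le_abs (hb : |b| < a + c) (hca : c < a) {x : ℝ} (hx : 1 ≤ |x|) :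
    0 < a * x ^ 2 + b * x + c := by
  have hbx : -(|b| * |x|) ≤ b * x := by rw [← abs_mul]; exact neg_abs_le _
  have hcx : c < a * |x| := by nlinarith [abs_nonneg b]
  calc 0 < (|x| - 1) * (a * |x| - c) + (a + c - |b|) * |x| := by
        have := mul_nonneg (sub_nonneg.mpr hx) (sub_pos.mpr hcx).le
        nlinarith
    _ = a * x ^ 2 - |b| * |x| + c := by rw [← sq_abs x]; ring
    _ ≤ a * x ^ 2 + b * x + c := by linarith

theorem norm_lt_one_of_quadratic_eq_zero (ha : 0 < a) (hb : |b| < a + c) (hca : c < a)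
    {z : ℂ} (hz : a * z ^ 2 + b * z + c = 0) : ‖z‖ < 1 := by
  have hre : a * (z.re ^ 2 - z.im ^ 2) + b * z.re + c = 0 := by
    simpa [sq] using congrArg re hz
  have him : z.im * (2 * a * z.re + b) = 0 := by
    have := congrArg im hz
    simp only [sq, add_im, mul_im, ofReal_re, ofReal_im, zero_mul, add_zero, mul_re,
      zero_im] at this
    linear_combination this
  rcases mul_eq_zero.mp him with hreal | hpair
  · have hz : z = z.re := ext rfl (by simpa using hreal)
    rw [hz, norm_real, Real.norm_eq_abs]
    by_contra! hx
    rw [hreal] at hre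
    linarith [quadratic_pos_of_one_le_abs hb hca hx]
  · have hnorm : a * ‖z‖ ^ 2 = c := by
      rw [Complex.sq_norm, normSq_apply]
      linear_combination -hre + z.re * hpair
    have : ‖z‖ ^ 2 < 1 := by nlinarith
    nlinarith [norm_nonneg z]

theorem quadratic_roots_norm_lt_one_iff (ha : 0 < a) :
    (∀ z : ℂ, a * z ^ 2 + b * z + c = 0 → ‖z‖ < 1) ↔ |b| < a + c ∧ c < a := by
  refine ⟨fun h => ⟨abs_lt.mpr ⟨?_, ?_⟩, lt_of_roots_norm_lt_one ha h⟩,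
    fun ⟨hb, hca⟩ z => norm_lt_one_of_quadratic_eq_zero ha hb hca⟩
  · have := add_add_pos_of_roots_norm_lt_one ha h
    linarith
  · have hneg : ∀ z : ℂ, a * z ^ 2 + ((-b : ℝ) : ℂ) * z + c = 0 → ‖z‖ < 1 := fun z hz =>
      norm_neg z ▸ h (-z) (by push_cast at hz ⊢; linear_combination hz)
    have := add_add_pos_of_roots_norm_lt_one ha hneg
    linarith

end QuadraticRootsInUnitDisk

/-- Stability of the IMEX 2-SBDF characteristic polynomial: for `ξ < 0`, every complex
root of `p(z) = (3 − 2ξ)z² − 4(μ+1)z + (1 + 2μ)` has modulus `< 1` iff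
`(ξ − 4)/3 < μ < −ξ`. -/
theorem sbdf2_characteristic_roots_stability (ξ μ : ℝ) (hξ : ξ < 0) :
    (∀ z : ℂ, ((3 : ℂ) - 2 * (ξ : ℂ)) * z ^ 2 - 4 * ((μ : ℂ) + 1) * z + (1 + 2 * (μ : ℂ)) = 0 →
        ‖z‖ < 1) ↔ ((ξ - 4) / 3 < μ ∧ μ < -ξ) := by
  have hp (z : ℂ) : ((3 : ℂ) - 2 * ξ) * z ^ 2 - 4 * (μ + 1) * z + (1 + 2 * μ) =
      ((3 - 2 * ξ : ℝ) : ℂ) * z ^ 2 + ((-(4 * (μ + 1)) : ℝ) : ℂ) * z + ((1 + 2 * μ : ℝ) : ℂ) := by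
    push_cast; ring
  simp only [hp]
  rw [quadratic_roots_norm_lt_one_iff (by linarith), abs_lt, div_lt_iff₀ (by norm_num)]
  constructor
  · rintro ⟨⟨h₁, h₂⟩, -⟩
    constructor <;> linarith
  · rintro ⟨h₁, h₂⟩
    refine ⟨⟨?_, ?_⟩, ?_⟩ <;> linarith
end

section
/- Let λ < 0 and α < 0 (so in particular λ + α < 0), let ω ∈ [1/2, 1], and set λ_ω = λ + ωα, α_ω = (1−ω)α, ξ = λ_ω h, μ = α_ω h for any h > 0. Then ξ < 0 and ξ − 2 < μ < −ξ; that is, the relaxed IMEX Euler method is unconditionally stable: its stability condition holds for every timestep h > 0. -/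
/-- Unconditional stability of the relaxed IMEX Euler method for `ω ∈ [1/2, 1]`:
if `λ < 0`, `α < 0` and `ω ∈ [1/2, 1]`, then for every timestep `h > 0`, setting
`λ_ω = λ + ωα`, `α_ω = (1−ω)α`, `ξ = λ_ω h`, `μ = α_ω h`, one has `ξ < 0` and
`ξ − 2 < μ < −ξ`. -/
theorem imexEuler_relaxed_unconditional_stability
    (lam α ω : ℝ) (hlam : lam < 0) (hα : α < 0) (hω : ω ∈ Set.Icc (1 / 2 : ℝ) 1)
    (h : ℝ) (hh : 0 < h)
    (lamω αω ξ μ : ℝ)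
    (hlamω : lamω = lam + ω * α) (hαω : αω = (1 - ω) * α)
    (hξ : ξ = lamω * h) (hμ : μ = αω * h) :
    ξ < 0 ∧ ξ - 2 < μ ∧ μ < -ξ := by
  obtain ⟨h1, h2⟩ := hω
  subst hlamω hαω hξ hμ
  have hωα : ω * α < 0 := mul_neg_of_pos_of_neg (by linarith) hα
  refine ⟨mul_neg_of_neg_of_pos (by linarith) hh, ?_, ?_⟩
  · have : (lam + (2 * ω - 1) * α) * h < 0 :=
      mul_neg_of_neg_of_pos (by nlinarith) hh
    nlinarith
  · have : (lam + α) * h < 0 := mul_neg_of_neg_of_pos (by linarith) hh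
    nlinarith
end

section
/- Let J ∈ ℝ^{n×n}, let D ∈ ℝ^{n×n} be a diagonal matrix with nonnegative diagonal entries, and let c ≥ 0. Then every (complex) eigenvalue λ of the matrix J̃ = J − c D satisfies Re λ ≤ λ_max(H(J)), where H(J) = (J + Jᵀ)/2 and λ_max denotes the largest eigenvalue of the symmetric matrix H(J). In particular, if λ_max(H(J)) ≤ 0 (the equilibrium is not reactive), then no eigenvalue of J − cD has positive real part, so reactivity is a prerequisite for Turing (diffusion-driven) instability. -/
/-! Bendixson's argument: if a real matrix `M` has `M v = λ v` with `v = a + i b ≠ 0`, pairing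
with `v̄` and taking real parts gives `Re λ (|a|² + |b|²) = aᵀMa + bᵀMb`, so `Re λ ≤ μ` for every
`μ` with `xᵀMx ≤ μ |x|²`. For `M = J − cD`, `xᵀMx = xᵀH(J)x − c xᵀDx ≤ xᵀH(J)x ≤ λ_max |x|²`,
the last step because `λ_max − H(J)` has nonnegative spectrum, hence is positive semidefinite. -/
open Matrix

theorem Matrix.IsHermitian.re_dotProduct_mulVec_le_iSup_eigenvalues_mul {𝕜 n : Type*} [RCLike 𝕜]
    [Fintype n] [DecidableEq n] {A : Matrix n n 𝕜} (hA : A.IsHermitian) (x : n → 𝕜) :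
    RCLike.re (star x ⬝ᵥ A *ᵥ x) ≤ (⨆ i, hA.eigenvalues i) * RCLike.re (star x ⬝ᵥ x) := by
  open scoped MatrixOrder in
  have hle : A ≤ algebraMap ℝ (Matrix n n 𝕜) (⨆ i, hA.eigenvalues i) := by
    refine le_algebraMap_of_spectrum_le (fun μ hμ => ?_) hA.isSelfAdjoint
    obtain ⟨i, rfl⟩ := hA.spectrum_real_eq_range_eigenvalues ▸ hμ
    exact le_ciSup (Set.finite_range _).bddAbove i
  simpa [sub_mulVec, Algebra.algebraMap_eq_smul_one, smul_mulVec, dotProduct_sub, RCLike.smul_re]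
    using (Matrix.le_iff.mp hle).re_dotProduct_nonneg x

theorem Matrix.dotProduct_mulVec_half_add_transpose {n R : Type*} [Fintype n] [Field R]
    [NeZero (2 : R)] (J : Matrix n n R) (x : n → R) :
    x ⬝ᵥ ((1 / 2 : R) • (J + Jᵀ)) *ᵥ x = x ⬝ᵥ J *ᵥ x := by
  have htranspose : x ⬝ᵥ Jᵀ *ᵥ x = x ⬝ᵥ J *ᵥ x := by
    rw [dotProduct_mulVec, vecMul_transpose, dotProduct_comm]
  rw [smul_mulVec, dotProduct_smul, add_mulVec, dotProduct_add, htranspose, smul_eq_mul,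
    ← two_mul, ← mul_assoc, one_div, inv_mul_cancel₀ two_ne_zero, one_mul]

theorem Matrix.re_star_dotProduct_map_ofReal_mulVec {n : Type*} [Fintype n]
    (M : Matrix n n ℝ) (v : n → ℂ) :
    (star v ⬝ᵥ M.map Complex.ofReal *ᵥ v).re =
      (fun i => (v i).re) ⬝ᵥ M *ᵥ (fun i => (v i).re) +
        (fun i => (v i).im) ⬝ᵥ M *ᵥ (fun i => (v i).im) := by
  simp only [dotProduct, mulVec, map_apply, Finset.mul_sum, Complex.re_sum,
    ← Finset.sum_add_distrib]
  refine Finset.sum_congr rfl fun i _ => Finset.sum_congr rfl fun j _ => ?_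
  simp only [Pi.star_apply, Complex.star_def, Complex.mul_re, Complex.mul_im, Complex.conj_re,
    Complex.conj_im, Complex.ofReal_re, Complex.ofReal_im]
  ring

theorem Matrix.re_le_of_mulVec_eq_smul_of_dotProduct_mulVec_le {n : Type*} [Fintype n]
    {M : Matrix n n ℝ} {μ : ℝ} (hM : ∀ x, x ⬝ᵥ M *ᵥ x ≤ μ * (x ⬝ᵥ x))
    {lam : ℂ} {v : n → ℂ} (hv : v ≠ 0) (hvlam : M.map Complex.ofReal *ᵥ v = lam • v) :
    lam.re ≤ μ := by
  classical
  open scoped ComplexOrder in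
  have hnorm := Complex.pos_iff.mp (dotProduct_star_self_pos_iff.mpr hv)
  have hnorm_re := re_star_dotProduct_map_ofReal_mulVec 1 v
  simp only [Matrix.map_one _ Complex.ofReal_zero Complex.ofReal_one, one_mulVec] at hnorm_re
  have hform : (star v ⬝ᵥ M.map Complex.ofReal *ᵥ v).re = lam.re * (star v ⬝ᵥ v).re := by
    rw [hvlam, dotProduct_smul, smul_eq_mul, Complex.mul_re, ← hnorm.2, mul_zero, sub_zero]
  rw [re_star_dotProduct_map_ofReal_mulVec, hnorm_re] at hform
  refine le_of_mul_le_mul_right ?_ (hnorm_re ▸ hnorm.1)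
  linarith [hM fun i => (v i).re, hM fun i => (v i).im]

/-- Reactivity is a prerequisite for Turing instability: if `D` is diagonal with
nonnegative entries and `c ≥ 0`, then every complex eigenvalue `λ` of `J − cD`
satisfies `Re λ ≤ λ_max(H(J))` with `H(J) = (J + Jᵀ)/2`; in particular, if
`λ_max(H(J)) ≤ 0` then no eigenvalue of `J − cD` has positive real part. -/
theorem reactivity_prerequisite_turing {n : ℕ}
    (J D : Matrix (Fin n) (Fin n) ℝ)
    (dvec : Fin n → ℝ) (hdvec : ∀ i, 0 ≤ dvec i) (hD : D = diagonal dvec)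
    (c : ℝ) (hc : 0 ≤ c)
    (H : Matrix (Fin n) (Fin n) ℝ) (hHdef : H = (1 / 2 : ℝ) • (J + Jᵀ))
    (hH : H.IsHermitian) :
    (∀ lam : ℂ,
        (∃ v : Fin n → ℂ, v ≠ 0 ∧
            ((J.map Complex.ofReal - (c : ℂ) • D.map Complex.ofReal)).mulVec v = lam • v) →
        lam.re ≤ ⨆ i, hH.eigenvalues i) ∧
    ((⨆ i, hH.eigenvalues i) ≤ 0 →
      ∀ lam : ℂ,
        (∃ v : Fin n → ℂ, v ≠ 0 ∧
            ((J.map Complex.ofReal - (c : ℂ) • D.map Complex.ofReal)).mulVec v = lam • v) →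
        ¬ 0 < lam.re) := by
  have hform : ∀ x, x ⬝ᵥ (J - c • D) *ᵥ x ≤ (⨆ i, hH.eigenvalues i) * (x ⬝ᵥ x) := fun x => by
    have hJ : x ⬝ᵥ J *ᵥ x ≤ (⨆ i, hH.eigenvalues i) * (x ⬝ᵥ x) := by
      calc x ⬝ᵥ J *ᵥ x = x ⬝ᵥ H *ᵥ x := by rw [hHdef, dotProduct_mulVec_half_add_transpose]
        _ ≤ _ := by simpa using hH.re_dotProduct_mulVec_le_iSup_eigenvalues_mul x
    have hD_nonneg : 0 ≤ x ⬝ᵥ D *ᵥ x := by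
      simpa using (hD ▸ PosSemidef.diagonal hdvec).dotProduct_mulVec_nonneg x
    rw [sub_mulVec, dotProduct_sub, smul_mulVec, dotProduct_smul, smul_eq_mul]
    linarith [mul_nonneg hc hD_nonneg]
  have hmap : (J - c • D).map Complex.ofReal =
      J.map Complex.ofReal - (c : ℂ) • D.map Complex.ofReal := by
    ext i j; simp
  have hre : ∀ lam : ℂ, (∃ v : Fin n → ℂ, v ≠ 0 ∧
      (J.map Complex.ofReal - (c : ℂ) • D.map Complex.ofReal) *ᵥ v = lam • v) →
      lam.re ≤ ⨆ i, hH.eigenvalues i := fun lam ⟨v, hv, hvlam⟩ =>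
    re_le_of_mulVec_eq_smul_of_dotProduct_mulVec_le hform hv (hmap ▸ hvlam)
  exact ⟨hre, fun hμ lam hlam => not_lt.mpr ((hre lam hlam).trans hμ)⟩
end
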